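/- arXiv:2011.05398 — 4 statements merged into one kernel-verified Lean document; each statement's English description precedes it below -/
import Mathlib

section
/- Let f be a quadratic polynomial as in the context. For every squarefree positive integer d one has ρ(d) ≤ λ(d), where λ(d)=Σ_{e|d} χ_Δ(e). -/
open Finset

noncomputable section

/-- The Kronecker symbol `(D/p)` at a prime `p`. -/
def kroneckerPrime (D : ℤ) (p : ℕ) : ℤ :=
  if p = 2 then (if D % 2 = 0 then 0 else if D % 8 = 1 ∨ D % 8 = 7 then 1 else -1)
  else jacobiSym D p

/-- The Kronecker symbol `χ_D(n) = (D/n)` for `n : ℕ`, extended multiplicatively. -/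
def kronecker (D : ℤ) (n : ℕ) : ℤ :=
  n.factorization.prod fun p k => kroneckerPrime D p ^ k

/-- `L(1, χ_D) = ∑_{n ≥ 1} χ_D(n)/n`, as the limit of its partial sums. -/
def LOne (D : ℤ) : ℝ :=
  Filter.limUnder Filter.atTop fun N : ℕ => ∑ n ∈ Finset.Icc 1 N, (kronecker D n : ℝ) / n

/-- `λ = 1 * χ_D`, i.e. `λ(n) = ∑_{d ∣ n} χ_D(d)`. -/
def lamArith (D : ℤ) (n : ℕ) : ℤ := ∑ d ∈ n.divisors, kronecker D d

/-- The quadratic polynomial `f(n) = a n² + b n + c`. -/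
def fInt (a b c n : ℤ) : ℤ := a * n ^ 2 + b * n + c

/-- `ρ(d) = #{n mod d : f(n) ≡ 0 (mod d)}`. -/
def rho (a b c : ℤ) (d : ℕ) : ℕ :=
  ((Finset.range d).filter fun n : ℕ => (d : ℤ) ∣ fInt a b c (n : ℤ)).card

/-- `A = #𝒜 = #{n ∈ ℤ : 0 ≤ f(n) ≤ N}`. -/
def Acard (a b c N : ℤ) : ℕ := Set.ncard {n : ℤ | 0 ≤ fInt a b c n ∧ fInt a b c n ≤ N}

/-- `A_d = #{n ∈ 𝒜 : d ∣ f(n)}`. -/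
def Adcard (a b c N : ℤ) (d : ℕ) : ℕ :=
  Set.ncard {n : ℤ | 0 ≤ fInt a b c n ∧ fInt a b c n ≤ N ∧ (d : ℤ) ∣ fInt a b c n}

/-- The finset of primes `p < x`. -/
def primesLT (x : ℝ) : Finset ℕ :=
  (Finset.range (Nat.ceil x + 1)).filter fun p => p.Prime ∧ (p : ℝ) < x

/-- `V(x) = ∏_{p < x} (1 - ρ(p)/p)`. -/
def Vprod (a b c : ℤ) (x : ℝ) : ℝ := ∏ p ∈ primesLT x, (1 - (rho a b c p : ℝ) / p)

/-- `W(x) = ∏_{p < x} (1 - 1/p)(1 - χ_D(p)/p)`. -/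
def Wprod (D : ℤ) (x : ℝ) : ℝ :=
  ∏ p ∈ primesLT x, ((1 - 1 / (p : ℝ)) * (1 - (kronecker D p : ℝ) / p))

/-- `P(z) = ∏_{p < z} p`. -/
def Pprod (z : ℝ) : ℕ := ∏ p ∈ primesLT z, p

/-- `S(𝒜, z) = #{n ∈ 𝒜 : gcd(f(n), P(z)) = 1}`. -/
def Ssieve (a b c N : ℤ) (z : ℝ) : ℕ :=
  Set.ncard {n : ℤ | 0 ≤ fInt a b c n ∧ fInt a b c n ≤ N ∧
    Int.gcd (fInt a b c n) (Pprod z) = 1}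

/-- `S(𝒜_p, z) = #{n ∈ 𝒜 : p ∣ f(n), gcd(f(n), P(z)) = 1}`. -/
def SsieveP (a b c N : ℤ) (p : ℕ) (z : ℝ) : ℕ :=
  Set.ncard {n : ℤ | 0 ≤ fInt a b c n ∧ fInt a b c n ≤ N ∧ (p : ℤ) ∣ fInt a b c n ∧
    Int.gcd (fInt a b c n) (Pprod z) = 1}

/-- `π_f(N) = #{n ∈ ℤ : 0 ≤ f(n) ≤ N, f(n) prime}`. -/
def piF (a b c N : ℤ) : ℕ :=
  Set.ncard {n : ℤ | 0 ≤ fInt a b c n ∧ fInt a b c n ≤ N ∧ Prime (fInt a b c n)}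

/-- `δ(x) = ∑_{x ≤ p ≤ A} λ(p)/p`. -/
def deltaSum (a b c N D : ℤ) (x : ℝ) : ℝ :=
  ∑ p ∈ (Finset.range (Acard a b c N + 1)).filter (fun p : ℕ => p.Prime ∧ x ≤ (p : ℝ)),
    (lamArith D p : ℝ) / p

/-- `β = -log(L(1,χ_D) · log|D|)`. -/
def betaE (D : ℤ) : ℝ := - Real.log (LOne D * Real.log |(D : ℝ)|)

/-- `g(Δ) = Δ e^{-β/2}` for `Δ > 0` and `|Δ|/(4|a| - e^{-β/2})` for `Δ < 0`. -/
def gDisc (a D : ℤ) : ℝ :=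
  if 0 < D then (D : ℝ) * Real.exp (-(betaE D) / 2)
  else |(D : ℝ)| / (4 * |(a : ℝ)| - Real.exp (-(betaE D) / 2))


/-!
`ρ` is multiplicative by the Chinese remainder theorem and `λ = 1 * χ_Δ` is multiplicative, so on
squarefree `d` it suffices to compare them at primes, where `λ(p) = 1 + χ_Δ(p)`. For odd `p`,
completing the square, `(2an + b)² ≡ Δ (mod p)`, maps the roots of `f` mod `p` injectively into the
`1 + (Δ/p)` square roots of `Δ` mod `p` (the gcd condition excludes `f ≡ 0`). For `p = 2` the parity
condition leaves at most one root, and a root forces `Δ ≡ 0 (mod 2)` or `Δ ≡ 1 (mod 8)`.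
-/

open ArithmeticFunction
open scoped ArithmeticFunction.zeta

/-- For `a = 0` there is at most one root, and any root makes `b` a square root of the
discriminant. -/
lemma card_roots_quadratic_le_card_sqrts {F : Type*} [Field F] [Fintype F] [DecidableEq F]
    (h2 : (2 : F) ≠ 0) {a b c : F} (habc : a = 0 → b = 0 → c ≠ 0) :
    #{x : F | a * x ^ 2 + b * x + c = 0} ≤ #{y : F | y ^ 2 = b ^ 2 - 4 * a * c} := by
  have hsq : ∀ x, a * x ^ 2 + b * x + c = 0 → (2 * a * x + b) ^ 2 = b ^ 2 - 4 * a * c :=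
    fun x hx => by linear_combination 4 * a * hx
  by_cases ha : a = 0
  · obtain hempty | ⟨x, hx⟩ := eq_empty_or_nonempty {x : F | a * x ^ 2 + b * x + c = 0}
    · simp [hempty]
    have hle : #{x : F | a * x ^ 2 + b * x + c = 0} ≤ 1 := by
      refine card_le_one.mpr fun y hy z hz => ?_
      simp only [mem_filter, mem_univ, true_and, ha, zero_mul, zero_add] at hy hz
      by_cases hb : b = 0
      · simp [hb, habc ha hb] at hy
      · exact mul_left_cancel₀ hb (by linear_combination hy - hz)
    refine hle.trans (card_pos.mpr ⟨2 * a * x + b, ?_⟩)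
    simp only [mem_filter, mem_univ, true_and] at hx ⊢
    exact hsq x hx
  · refine card_le_card_of_injOn (fun x => 2 * a * x + b) (fun x hx => ?_) fun x _ y _ hxy => ?_
    · simp only [coe_filter, mem_univ, true_and, Set.mem_ofPred_eq] at hx ⊢
      exact hsq x hx
    · exact mul_left_cancel₀ (mul_ne_zero h2 ha) (add_right_cancel hxy)

theorem ArithmeticFunction.IsMultiplicative.apply_le_of_squarefree {R : Type*}
    [CommMonoidWithZero R] [Preorder R] [ZeroLEOneClass R] [PosMulMono R]
    {f g : ArithmeticFunction R} (hf : f.IsMultiplicative) (hg : g.IsMultiplicative)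
    (hfg : ∀ p, p.Prime → 0 ≤ f p ∧ f p ≤ g p) {n : ℕ} (hn : Squarefree n) : f n ≤ g n := by
  rw [← hf.prod_primeFactors hn, ← hg.prod_primeFactors hn]
  exact prod_le_prod (fun p hp => (hfg p (Nat.prime_of_mem_primeFactors hp)).1)
    fun p hp => (hfg p (Nat.prime_of_mem_primeFactors hp)).2

lemma kronecker_one (D : ℤ) : kronecker D 1 = 1 := by
  simp [kronecker]

lemma kronecker_prime (D : ℤ) {p : ℕ} (hp : p.Prime) : kronecker D p = kroneckerPrime D p := by
  simp [kronecker, hp.factorization]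

lemma kronecker_mul (D : ℤ) {m n : ℕ} (hm : m ≠ 0) (hn : n ≠ 0) :
    kronecker D (m * n) = kronecker D m * kronecker D n := by
  rw [kronecker, Nat.factorization_mul hm hn]
  exact Finsupp.prod_add_index' (fun _ => pow_zero _) (fun _ _ _ => pow_add _ _ _)

lemma neg_one_le_kroneckerPrime (D : ℤ) (p : ℕ) : -1 ≤ kroneckerPrime D p := by
  unfold kroneckerPrime
  split_ifs <;> try norm_num
  rcases jacobiSym.trichotomy D p with h | h | h <;> simp [h]

/-- `kronecker D 0 = 1` (empty product), so the value at `0` is overridden. -/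
def kroneckerArith (D : ℤ) : ArithmeticFunction ℤ :=
  ⟨fun n => if n = 0 then 0 else kronecker D n, if_pos rfl⟩

lemma isMultiplicative_kroneckerArith (D : ℤ) : (kroneckerArith D).IsMultiplicative := by
  refine ⟨by simp [kroneckerArith, kronecker_one], fun {m n} _ => ?_⟩
  rcases eq_or_ne m 0 with rfl | hm
  · simp [kroneckerArith]
  rcases eq_or_ne n 0 with rfl | hn
  · simp [kroneckerArith]
  simp [kroneckerArith, hm, hn, kronecker_mul D hm hn]

lemma lamArith_eq_zeta_mul_kroneckerArith (D : ℤ) (n : ℕ) :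
    lamArith D n = ((↑ζ : ArithmeticFunction ℤ) * kroneckerArith D) n := by
  rw [coe_zeta_mul_apply, lamArith]
  refine sum_congr rfl fun d hd => ?_
  simp [kroneckerArith, (Nat.pos_of_mem_divisors hd).ne']

lemma isMultiplicative_zeta_mul_kroneckerArith (D : ℤ) :
    ((↑ζ : ArithmeticFunction ℤ) * kroneckerArith D).IsMultiplicative :=
  isMultiplicative_zeta.natCast.mul (isMultiplicative_kroneckerArith D)

lemma lamArith_prime (D : ℤ) {p : ℕ} (hp : p.Prime) : lamArith D p = 1 + kroneckerPrime D p := by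
  rw [lamArith, hp.divisors, sum_pair hp.one_lt.ne, kronecker_one, kronecker_prime D hp]

lemma rho_eq_card_roots (a b c : ℤ) (d : ℕ) [NeZero d] :
    rho a b c d = #{x : ZMod d | (a : ZMod d) * x ^ 2 + b * x + c = 0} := by
  refine card_nbij' (fun n => (n : ZMod d)) ZMod.val (fun n hn => ?_) (fun x hx => ?_)
    (fun n hn => ZMod.val_cast_of_lt (mem_range.mp (mem_filter.mp hn).1))
    (fun x _ => ZMod.natCast_zmod_val x)
  · simp only [coe_filter, mem_range, Set.mem_ofPred_eq, mem_univ, true_and] at hn ⊢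
    simpa [fInt] using (ZMod.intCast_zmod_eq_zero_iff_dvd _ d).mpr hn.2
  · simp only [coe_filter, mem_univ, true_and, Set.mem_ofPred_eq, mem_range] at hx ⊢
    refine ⟨ZMod.val_lt x, (ZMod.intCast_zmod_eq_zero_iff_dvd _ d).mp ?_⟩
    simpa [fInt] using hx

lemma rho_mul_of_coprime (a b c : ℤ) {m n : ℕ} (hm : m ≠ 0) (hn : n ≠ 0) (h : m.Coprime n) :
    rho a b c (m * n) = rho a b c m * rho a b c n := by
  have : NeZero m := ⟨hm⟩
  have : NeZero n := ⟨hn⟩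
  have : NeZero (m * n) := ⟨mul_ne_zero hm hn⟩
  let e := ZMod.chineseRemainder h
  rw [rho_eq_card_roots, rho_eq_card_roots, rho_eq_card_roots, ← card_product,
    ← filter_product, univ_product_univ]
  refine card_equiv e.toEquiv fun x => ?_
  rw [mem_filter, mem_filter, ← map_eq_zero_iff e e.injective]
  simp [Prod.ext_iff]

def rhoArith (a b c : ℤ) : ArithmeticFunction ℤ :=
  ⟨fun d => rho a b c d, by simp [rho]⟩

lemma isMultiplicative_rhoArith (a b c : ℤ) : (rhoArith a b c).IsMultiplicative := by
  refine ⟨by simp [rhoArith, rho], fun {m n} h => ?_⟩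
  rcases eq_or_ne m 0 with rfl | hm
  · simp [rhoArith, rho]
  rcases eq_or_ne n 0 with rfl | hn
  · simp [rhoArith, rho]
  simp [rhoArith, rho_mul_of_coprime a b c hm hn h]

lemma intCast_ne_zero_of_gcd_eq_one {a b c : ℤ} (hgcd : Int.gcd a (Int.gcd b c) = 1)
    {p : ℕ} (hp : p.Prime) (ha : (a : ZMod p) = 0) (hb : (b : ZMod p) = 0) :
    (c : ZMod p) ≠ 0 := by
  rw [Ne, ZMod.intCast_zmod_eq_zero_iff_dvd] at *
  intro hc
  have := Int.dvd_coe_gcd ha (Int.dvd_coe_gcd hb hc)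
  rw [hgcd, Int.natCast_dvd_natCast, Nat.dvd_one] at this
  exact hp.ne_one this

lemma rho_le_one_add_jacobiSym {a b c D : ℤ} (hgcd : Int.gcd a (Int.gcd b c) = 1)
    (hD : D = b ^ 2 - 4 * a * c) {p : ℕ} (hp : p.Prime) (hp2 : p ≠ 2) :
    (rho a b c p : ℤ) ≤ 1 + jacobiSym D p := by
  have : Fact p.Prime := ⟨hp⟩
  have h2 : (2 : ZMod p) ≠ 0 := by
    rw [Ne, ← Nat.cast_ofNat, ZMod.natCast_eq_zero_iff]
    exact fun h => hp2 ((Nat.prime_dvd_prime_iff_eq hp Nat.prime_two).mp h)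
  have hDp : (D : ZMod p) = b ^ 2 - 4 * a * c := by rw [hD]; push_cast; ring
  rw [← jacobiSym.legendreSym.to_jacobiSym, add_comm, ← legendreSym.card_sqrts p hp2,
    rho_eq_card_roots, Set.toFinset_ofPred, hDp, Nat.cast_le]
  exact card_roots_quadratic_le_card_sqrts h2 (intCast_ne_zero_of_gcd_eq_one hgcd hp)

lemma rho_two (a b c : ℤ) :
    rho a b c 2 = (if 2 ∣ c then 1 else 0) + (if 2 ∣ a + b + c then 1 else 0) := by
  have hf0 : fInt a b c ((0 : ℕ) : ℤ) = c := by simp [fInt]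
  have hf1 : fInt a b c ((1 : ℕ) : ℤ) = a + b + c := by simp [fInt]
  rw [rho, show range 2 = {0, 1} by decide, filter_insert, filter_singleton, hf0, hf1]
  by_cases hc : (2 : ℤ) ∣ c <;> by_cases habc : (2 : ℤ) ∣ a + b + c <;> simp [hc, habc]

/-- For odd `b`, a root of `f` modulo 2 forces `ac` to be even, hence `Δ ≡ 1 (mod 8)`. -/
lemma kroneckerPrime_two_nonneg {a b c D : ℤ} (hD : D = b ^ 2 - 4 * a * c)
    (hroot : 2 ∣ c ∨ 2 ∣ a + b + c) : 0 ≤ kroneckerPrime D 2 := by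
  have hD8 : D % 2 = 0 ∨ D % 8 = 1 := by
    rcases Int.even_or_odd b with ⟨k, rfl⟩ | hb
    · have : D = 2 * (2 * k * k - 2 * a * c) := by rw [hD]; ring
      omega
    · have hac : Even (a * c) := by
        rw [Int.even_mul, Int.even_iff, Int.even_iff]
        rw [Int.odd_iff] at hb
        omega
      obtain ⟨k, rfl⟩ := hb
      obtain ⟨u, hu⟩ := hac
      obtain ⟨v, hv⟩ := Int.even_mul_succ_self k
      have : D = 4 * (k * (k + 1)) + 1 - 4 * (a * c) := by rw [hD]; ring
      omega
  simp only [kroneckerPrime]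
  rcases hD8 with h | h
  · simp [h]
  · simp [h, show D % 2 ≠ 0 by omega]

lemma rho_two_le {a b c D : ℤ} (hpar : Odd (a + b) ∨ Odd c) (hD : D = b ^ 2 - 4 * a * c) :
    (rho a b c 2 : ℤ) ≤ 1 + kroneckerPrime D 2 := by
  have hpar' : ¬ (2 ∣ c ∧ 2 ∣ a + b + c) := by
    rw [Int.odd_iff, Int.odd_iff] at hpar
    omega
  by_cases hroot : 2 ∣ c ∨ 2 ∣ a + b + c
  · have hρ : rho a b c 2 ≤ 1 := by
      rw [rho_two]
      split_ifs <;> simp_all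
    have := kroneckerPrime_two_nonneg hD hroot
    omega
  · have hρ : rho a b c 2 = 0 := by
      rw [rho_two]
      simp_all
    have := neg_one_le_kroneckerPrime D 2
    omega

theorem rho_le_lambda_general (a b c D : ℤ)
    (hgcd : Int.gcd a (Int.gcd b c) = 1)
    (hpar : Odd (a + b) ∨ Odd c)
    (hD : D = b ^ 2 - 4 * a * c)
    (d : ℕ) (hsf : Squarefree d) :
    (rho a b c d : ℤ) ≤ lamArith D d := by
  rw [lamArith_eq_zeta_mul_kroneckerArith]
  refine (isMultiplicative_rhoArith a b c).apply_le_of_squarefree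
    (isMultiplicative_zeta_mul_kroneckerArith D) (fun p hp => ⟨Int.natCast_nonneg _, ?_⟩) hsf
  change (rho a b c p : ℤ) ≤ _
  rw [← lamArith_eq_zeta_mul_kroneckerArith, lamArith_prime D hp]
  rcases eq_or_ne p 2 with rfl | hp2
  · exact rho_two_le hpar hD
  · simpa [kroneckerPrime, hp2] using rho_le_one_add_jacobiSym hgcd hD hp hp2

theorem rho_le_lambda (a b c D : ℤ)
    (ha : a ≠ 0) (hgcd : Int.gcd a (Int.gcd b c) = 1)
    (hpar : Odd (a + b) ∨ Odd c)
    (hD : D = b ^ 2 - 4 * a * c) (hsq : ¬ IsSquare D)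
    (d : ℕ) (hd : 0 < d) (hsf : Squarefree d) :
    (rho a b c d : ℤ) ≤ lamArith D d :=
  rho_le_lambda_general a b c D hgcd hpar hD d hsf
end
end

section
/- Let f be a quadratic polynomial as in the context and N ≥ 1 an integer. For every positive integer d, |A_d − (ρ(d)/d)·A| ≤ 2·ρ(d); that is, the number of integers n with 0 ≤ f(n) ≤ N and d | f(n) equals (ρ(d)/d)·A up to an error of absolute value at most 2ρ(d). -/
open Finset

noncomputable section

/-!
Whether `d ∣ f(n)` holds depends only on `n mod d`, so every `d` consecutive integers contain exactly
`ρ(d)` solutions, and on any integer interval the count of solutions differs from `ρ(d)/d` times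
the length by at most `ρ(d)` (whole periods are exact, the shorter remainder costs at most `ρ(d)`).
As `f` is convex or concave, `𝒜` is the difference of two integer intervals, i.e. a disjoint union
of at most two intervals, and the two errors add up to `2ρ(d)`.
-/

theorem Set.OrdConnected.eq_Icc_csInf_csSup {α : Type*} [ConditionallyCompleteLinearOrder α]
    {S : Set α} (hS : S.OrdConnected) (hfin : S.Finite) (hne : S.Nonempty) :
    S = Set.Icc (sInf S) (sSup S) :=
  Set.Subset.antisymm
    (fun _ hx => ⟨csInf_le hfin.bddBelow hx, le_csSup hfin.bddAbove hx⟩)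
    (hS.out (hne.csInf_mem hfin) (hne.csSup_mem hfin))

/-- Outside an order-connected set `J`, a point lies either below all of `J` or above all of it. -/
theorem Set.OrdConnected.exists_diff_eq_union {α : Type*} [LinearOrder α] {I J : Set α}
    (hI : I.OrdConnected) (hJ : J.OrdConnected) :
    ∃ S T : Set α, S.OrdConnected ∧ T.OrdConnected ∧ Disjoint S T ∧ I \ J = S ∪ T := by
  rcases J.eq_empty_or_nonempty with rfl | ⟨y₀, hy₀⟩
  · exact ⟨I, ∅, hI, Set.ordConnected_empty, Set.disjoint_empty I, by simp⟩
  refine ⟨I ∩ {x | ∀ y ∈ J, x < y}, I ∩ {x | ∀ y ∈ J, y < x},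
    hI.inter ⟨fun _ _ _ hz _ hw y hy => hw.2.trans_lt (hz y hy)⟩,
    hI.inter ⟨fun _ hx _ _ _ hw y hy => (hx y hy).trans_le hw.1⟩,
    Set.disjoint_left.2 fun _ h₁ h₂ => lt_asymm (h₁.2 y₀ hy₀) (h₂.2 y₀ hy₀), ?_⟩
  ext x
  constructor
  · rintro ⟨hxI, hxJ⟩
    by_contra hx
    simp only [Set.mem_union, Set.mem_inter_iff, Set.mem_ofPred_eq, not_or, not_and,
      not_forall, not_lt] at hx
    obtain ⟨y₁, hy₁, hy₁x⟩ := hx.1 hxI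
    obtain ⟨y₂, hy₂, hxy₂⟩ := hx.2 hxI
    exact hxJ (hJ.out hy₁ hy₂ ⟨hy₁x, hxy₂⟩)
  · rintro (⟨hxI, hx⟩ | ⟨hxI, hx⟩)
    · exact ⟨hxI, fun hxJ => lt_irrefl x (hx x hxJ)⟩
    · exact ⟨hxI, fun hxJ => lt_irrefl x (hx x hxJ)⟩

namespace Function.Periodic

variable {p : ℤ → Prop} {d : ℕ}

theorem apply_emod (hp : Periodic p d) (n : ℤ) : p (n % d) = p n := by
  rw [Int.emod_def, mul_comm, ← smul_eq_mul, hp.sub_zsmul_eq]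

variable [DecidablePred p]

theorem card_filter_Ico_add (hp : Periodic p d) (u : ℤ) :
    #{n ∈ Ico u (u + d) | p n} = #{n ∈ Ico 0 (d : ℤ) | p n} := by
  have hinj : Set.InjOn (· % (d : ℤ)) (Ico u (u + d)) := by
    rw [← card_image_iff, Int.image_Ico_emod u d d.cast_nonneg]
    simp
  rw [← Int.image_Ico_emod u d d.cast_nonneg, filter_image,
    card_image_of_injOn (hinj.mono (filter_subset _ _))]
  congr 1
  ext n
  simp only [mem_filter, hp.apply_emod]

theorem card_filter_Ico_add_mul (hp : Periodic p d) (u : ℤ) (q : ℕ) :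
    #{n ∈ Ico u (u + q * d) | p n} = q * #{n ∈ Ico 0 (d : ℤ) | p n} := by
  induction q with
  | zero => simp
  | succ q ih =>
    have hsplit : Ico u (u + (q + 1 : ℕ) * d)
        = Ico u (u + q * d) ∪ Ico (u + q * d) (u + q * d + d) := by
      rw [Ico_union_Ico_eq_Ico (le_add_of_nonneg_right (by positivity))
        (le_add_of_nonneg_right d.cast_nonneg)]
      push_cast
      ring_nf
    rw [hsplit, filter_union, card_union_of_disjoint
      (disjoint_filter_filter (Ico_disjoint_Ico_consecutive _ _ _)), ih, hp.card_filter_Ico_add]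
    ring

theorem card_filter_Ico_le (hp : Periodic p d) {u v : ℤ} (h : v ≤ u + d) :
    #{n ∈ Ico u v | p n} ≤ #{n ∈ Ico 0 (d : ℤ) | p n} :=
  hp.card_filter_Ico_add u ▸ card_le_card (filter_subset_filter _ (Ico_subset_Ico_right h))

theorem abs_card_filter_Ico_sub_le (hp : Periodic p d) (hd : 0 < d) (u v : ℤ) :
    |(#{n ∈ Ico u v | p n} : ℝ) - #{n ∈ Ico 0 (d : ℤ) | p n} / d * #(Ico u v)| ≤
      #{n ∈ Ico 0 (d : ℤ) | p n} := by
  set κ := #{n ∈ Ico 0 (d : ℤ) | p n}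
  rcases le_total v u with hvu | huv
  · simp [Ico_eq_empty_of_le hvu]
  have hd' : (0 : ℤ) < d := by exact_mod_cast hd
  obtain ⟨q, r, hr₀, hrd, rfl⟩ : ∃ q : ℕ, ∃ r : ℤ, 0 ≤ r ∧ r < d ∧ v = u + q * d + r :=
    ⟨((v - u) / d).toNat, (v - u) % d, Int.emod_nonneg _ hd'.ne', Int.emod_lt_of_pos _ hd', by
      rw [Int.toNat_of_nonneg (Int.ediv_nonneg (by omega) hd'.le)]
      linarith [Int.emod_add_mul_ediv (v - u) d]⟩
  set w := u + q * d
  have hw : u ≤ w := le_add_of_nonneg_right (by positivity)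
  have hcount : #{n ∈ Ico u (w + r) | p n} = q * κ + #{n ∈ Ico w (w + r) | p n} := by
    rw [← Ico_union_Ico_eq_Ico hw (by omega), filter_union, card_union_of_disjoint
      (disjoint_filter_filter (Ico_disjoint_Ico_consecutive _ _ _)), hp.card_filter_Ico_add_mul]
  have hcard : ((#(Ico u (w + r)) : ℕ) : ℝ) = q * d + r := by
    have : ((#(Ico u (w + r)) : ℕ) : ℤ) = q * d + r := by
      rw [Int.card_Ico]
      omega
    exact_mod_cast this
  have hrest := hp.card_filter_Ico_le (u := w) (v := w + r) (by omega)
  have hdR : (0 : ℝ) < d := by exact_mod_cast hd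
  have hrR : (r : ℝ) ≤ d := by exact_mod_cast hrd.le
  rw [hcount, hcard, Nat.cast_add, Nat.cast_mul,
    show (q * κ + #{n ∈ Ico w (w + r) | p n} : ℝ) - κ / d * (q * d + r)
      = #{n ∈ Ico w (w + r) | p n} - κ * (r / d) by field_simp; ring]
  apply abs_sub_le_of_nonneg_of_le (Nat.cast_nonneg _) (by exact_mod_cast hrest)
  · positivity
  · exact mul_le_of_le_one_right (Nat.cast_nonneg _) ((div_le_one hdR).2 hrR)

theorem abs_ncard_inter_sub_le (hp : Periodic p d) (hd : 0 < d) {S : Set ℤ}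
    (hS : S.OrdConnected) (hfin : S.Finite) :
    |((S ∩ {n | p n}).ncard : ℝ) - #{n ∈ Ico 0 (d : ℤ) | p n} / d * S.ncard| ≤
      #{n ∈ Ico 0 (d : ℤ) | p n} := by
  rcases S.eq_empty_or_nonempty with rfl | hne
  · simp
  obtain ⟨m, M, rfl⟩ : ∃ m M : ℤ, S = ↑(Ico m M) := ⟨sInf S, sSup S + 1, by
    rw [Ico_add_one_right_eq_Icc, coe_Icc]
    exact hS.eq_Icc_csInf_csSup hfin hne⟩
  have hfilter : ↑(Ico m M) ∩ {n | p n} = (↑{n ∈ Ico m M | p n} : Set ℤ) := by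
    rw [coe_filter]
    rfl
  rw [hfilter, Set.ncard_coe_finset, Set.ncard_coe_finset]
  exact hp.abs_card_filter_Ico_sub_le hd _ _

theorem abs_ncard_union_inter_sub_le (hp : Periodic p d) (hd : 0 < d) {S T : Set ℤ}
    (hS : S.OrdConnected) (hT : T.OrdConnected) (hST : Disjoint S T) (hfin : (S ∪ T).Finite) :
    |(((S ∪ T) ∩ {n | p n}).ncard : ℝ) - #{n ∈ Ico 0 (d : ℤ) | p n} / d * (S ∪ T).ncard| ≤
      2 * #{n ∈ Ico 0 (d : ℤ) | p n} := by
  set κ := #{n ∈ Ico 0 (d : ℤ) | p n}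
  have hSfin := hfin.subset Set.subset_union_left
  have hTfin := hfin.subset Set.subset_union_right
  rw [Set.union_inter_distrib_right, Set.ncard_union_eq hST hSfin hTfin,
    Set.ncard_union_eq (hST.mono Set.inter_subset_left Set.inter_subset_left)
      (hSfin.subset Set.inter_subset_left) (hTfin.subset Set.inter_subset_left)]
  push_cast
  calc _ = |((S ∩ {n | p n}).ncard - κ / d * S.ncard : ℝ)
          + ((T ∩ {n | p n}).ncard - κ / d * T.ncard)| := by ring_nf
    _ ≤ |((S ∩ {n | p n}).ncard - κ / d * S.ncard : ℝ)|
          + |((T ∩ {n | p n}).ncard - κ / d * T.ncard : ℝ)| := abs_add_le _ _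
    _ ≤ κ + κ := add_le_add (hp.abs_ncard_inter_sub_le hd hS hSfin)
          (hp.abs_ncard_inter_sub_le hd hT hTfin)
    _ = 2 * κ := by ring

end Function.Periodic

section Quadratic

variable {a b c : ℤ}

theorem fInt_neg (a b c n : ℤ) : fInt (-a) (-b) (-c) n = -fInt a b c n := by
  unfold fInt
  ring

theorem periodic_dvd_fInt (a b c : ℤ) (d : ℕ) :
    Function.Periodic (fun n => (d : ℤ) ∣ fInt a b c n) d := fun n => by
  dsimp only
  rw [show fInt a b c (n + d) = fInt a b c n + d * (2 * a * n + a * d + b) by unfold fInt; ring]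
  exact propext (dvd_add_left (dvd_mul_right _ _))

theorem rho_eq_card_filter_Ico (a b c : ℤ) (d : ℕ) :
    rho a b c d = #{n ∈ Ico 0 (d : ℤ) | (d : ℤ) ∣ fInt a b c n} := by
  rw [rho, ← card_map (Nat.castEmbedding : ℕ ↪ ℤ)]
  congr 1
  ext n
  simp only [mem_filter, mem_Ico, mem_map, mem_range, Nat.castEmbedding_apply]
  constructor
  · rintro ⟨k, ⟨hk, hdvd⟩, rfl⟩
    exact ⟨⟨by omega, by omega⟩, hdvd⟩
  · rintro ⟨⟨h₀, h₁⟩, hdvd⟩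
    lift n to ℕ using h₀
    exact ⟨n, ⟨by omega, hdvd⟩, rfl⟩

/-- `(y - x) f(n) = (y - n) f(x) + (n - x) f(y) - a (n - x)(y - n)(y - x)` with `a ≥ 0`. -/
theorem ordConnected_setOf_fInt_le (ha : 0 ≤ a) (K : ℤ) :
    {n | fInt a b c n ≤ K}.OrdConnected := by
  refine Set.ordConnected_def.2 fun x hx y hy n hn => ?_
  rcases hn.1.eq_or_lt with rfl | hxn
  · exact hx
  have hxy : 0 < y - x := by linarith [hn.2]
  refine le_of_mul_le_mul_left ?_ hxy
  have h₁ := mul_le_mul_of_nonneg_left hx (sub_nonneg.2 hn.2)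
  have h₂ := mul_le_mul_of_nonneg_left hy (sub_nonneg.2 hn.1)
  have h₃ : 0 ≤ a * ((n - x) * (y - n) * (y - x)) :=
    mul_nonneg ha (mul_nonneg (mul_nonneg (by linarith) (sub_nonneg.2 hn.2)) hxy.le)
  have key : (y - x) * fInt a b c n
      = (y - n) * fInt a b c x + (n - x) * fInt a b c y - a * ((n - x) * (y - n) * (y - x)) := by
    unfold fInt
    ring
  rw [key]
  linear_combination h₁ + h₂ + h₃

theorem finite_setOf_fInt_le (ha : 0 < a) (K : ℤ) : {n | fInt a b c n ≤ K}.Finite := by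
  refine (Set.finite_Icc (-(|b| + |c| + |K|)) (|b| + |c| + |K|)).subset fun n hn => ?_
  rw [Set.mem_Icc, ← abs_le]
  by_contra! hlt
  have hbn : -(|b| * |n|) ≤ b * n := by rw [← abs_mul]; exact neg_abs_le _
  have hn2 : n ^ 2 = |n| * |n| := by rw [← sq_abs]; ring
  have : fInt a b c n ≤ K := hn
  unfold fInt at this
  nlinarith [neg_abs_le c, le_abs_self K, abs_nonneg b, abs_nonneg c, abs_nonneg K]

theorem finite_setOf_fInt_mem_Icc (ha : a ≠ 0) (L R : ℤ) :
    {n | L ≤ fInt a b c n ∧ fInt a b c n ≤ R}.Finite := by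
  rcases ha.lt_or_gt with ha | ha
  · refine (finite_setOf_fInt_le (b := -b) (c := -c) (neg_pos.2 ha) (-L)).subset fun n hn => ?_
    simp only [Set.mem_ofPred_eq, fInt_neg] at hn ⊢
    omega
  · exact (finite_setOf_fInt_le ha R).subset fun n hn => hn.2

/-- `{L ≤ f ≤ R}` is `{f ≤ R} \ {f < L}` for `a > 0` and `{L ≤ f} \ {R < f}` for `a < 0`. -/
theorem exists_ordConnected_union_eq_setOf_fInt_mem_Icc (ha : a ≠ 0) (L R : ℤ) :
    ∃ S T : Set ℤ, S.OrdConnected ∧ T.OrdConnected ∧ Disjoint S T ∧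
      {n | L ≤ fInt a b c n ∧ fInt a b c n ≤ R} = S ∪ T := by
  rcases ha.lt_or_gt with ha | ha
  · have hconv := ordConnected_setOf_fInt_le (b := -b) (c := -c) (neg_nonneg.2 ha.le)
    have hdiff : {n | L ≤ fInt a b c n ∧ fInt a b c n ≤ R}
        = {n | fInt (-a) (-b) (-c) n ≤ -L} \ {n | fInt (-a) (-b) (-c) n ≤ -R - 1} := by
      ext n
      simp only [Set.mem_ofPred_eq, Set.mem_sdiff, fInt_neg]
      omega
    rw [hdiff]
    exact (hconv (-L)).exists_diff_eq_union (hconv (-R - 1))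
  · have hconv := ordConnected_setOf_fInt_le (b := b) (c := c) ha.le
    have hdiff : {n | L ≤ fInt a b c n ∧ fInt a b c n ≤ R}
        = {n | fInt a b c n ≤ R} \ {n | fInt a b c n ≤ L - 1} := by
      ext n
      simp only [Set.mem_ofPred_eq, Set.mem_sdiff]
      omega
    rw [hdiff]
    exact (hconv R).exists_diff_eq_union (hconv (L - 1))

end Quadratic

theorem Ad_asymptotic_general (a b c N : ℤ)
    (ha : a ≠ 0) (d : ℕ) (hd : 0 < d) :
    |(Adcard a b c N d : ℝ) - (rho a b c d : ℝ) / d * (Acard a b c N : ℝ)| ≤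
      2 * (rho a b c d : ℝ) := by
  obtain ⟨S, T, hS, hT, hST, hA⟩ :=
    exists_ordConnected_union_eq_setOf_fInt_mem_Icc (b := b) (c := c) ha 0 N
  have hfin : (S ∪ T).Finite := hA ▸ finite_setOf_fInt_mem_Icc ha 0 N
  have hAd : {n | 0 ≤ fInt a b c n ∧ fInt a b c n ≤ N ∧ (d : ℤ) ∣ fInt a b c n}
      = (S ∪ T) ∩ {n | (d : ℤ) ∣ fInt a b c n} := by
    rw [← hA]
    ext n
    simp only [Set.mem_inter_iff, Set.mem_ofPred_eq, and_assoc]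
  rw [Adcard, Acard, hAd, hA, rho_eq_card_filter_Ico]
  exact (periodic_dvd_fInt a b c d).abs_ncard_union_inter_sub_le hd hS hT hST hfin

theorem Ad_asymptotic (a b c D N : ℤ)
    (ha : a ≠ 0) (hgcd : Int.gcd a (Int.gcd b c) = 1)
    (hpar : Odd (a + b) ∨ Odd c)
    (hD : D = b ^ 2 - 4 * a * c) (hsq : ¬ IsSquare D)
    (hN : 1 ≤ N) (d : ℕ) (hd : 0 < d) :
    |(Adcard a b c N d : ℝ) - (rho a b c d : ℝ) / d * (Acard a b c N : ℝ)| ≤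
      2 * (rho a b c d : ℝ) :=
  Ad_asymptotic_general a b c N ha d hd
end
end

section
/- Let f(x)=ax²+bx+c with a,b,c ∈ ℝ, a ≠ 0, Δ=b²−4ac ≠ 0, and let N > 0. Then the Lebesgue measure X of the set {x ∈ ℝ : 0 ≤ f(x) ≤ N} is given by: X = √(Δ+4aN)/a if Δ<0, a>0 and N > |Δ|/(4a); X = 4N/(√(Δ+4aN)+√Δ) if Δ>0 and a>0, or if Δ>0, a<0 and N ≤ Δ/(4|a|); X = √Δ/|a| if Δ>0, a<0 and N > Δ/(4|a|); and X = 0 in all remaining cases. -/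
open Finset

noncomputable section

/-! Completing the square, `4a·f(x) = (2ax + b)² - Δ`, so the set is the preimage under
`x ↦ 2ax + b` of `{u | lo ≤ u² ≤ hi}`, where `{lo, hi} = {Δ, Δ + 4aN}` in the order given by the
sign of `a`. That set is a pair of intervals of total length `max (2(√hi - √lo)) 0`; since `√`
vanishes on negatives, this needs no sign conditions on `lo` and `hi`. Dividing by `|2a|` gives the
measure `max ((√(Δ + 4aN) - √Δ) / a) 0`, and rationalising `√(Δ + 4aN) - √Δ` yields the cases. -/

open MeasureTheory

namespace Real

lemma setOf_sq_mem_Icc_eq_union {α β : ℝ} (hβ : 0 ≤ β) :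
    {t : ℝ | α ≤ t ^ 2 ∧ t ^ 2 ≤ β} = Set.Icc (-√β) (-√α) ∪ Set.Icc √α √β := by
  ext t
  have hα : α ≤ t ^ 2 ↔ √α ≤ |t| := by
    rw [← sqrt_sq_eq_abs, sqrt_le_sqrt_iff (sq_nonneg t)]
  have hβ' : t ^ 2 ≤ β ↔ |t| ≤ √β := by
    rw [← sq_abs, le_sqrt (abs_nonneg t) hβ]
  simp only [Set.mem_ofPred_eq, Set.mem_union, Set.mem_Icc, hα, hβ', le_abs', abs_le]
  have := sqrt_nonneg α
  constructor
  · rintro ⟨h | h, h₁, h₂⟩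
    · exact Or.inl ⟨h₁, h⟩
    · exact Or.inr ⟨h, h₂⟩
  · rintro (⟨h₁, h₂⟩ | ⟨h₁, h₂⟩)
    · exact ⟨Or.inl h₂, h₁, by linarith⟩
    · exact ⟨Or.inr h₁, by linarith, h₂⟩

lemma volume_setOf_sq_mem_Icc (α β : ℝ) :
    volume {t : ℝ | α ≤ t ^ 2 ∧ t ^ 2 ≤ β} = ENNReal.ofReal (2 * (√β - √α)) := by
  have hα := sqrt_nonneg α
  rcases lt_or_ge β 0 with hβ | hβ
  · have hempty : {t : ℝ | α ≤ t ^ 2 ∧ t ^ 2 ≤ β} = ∅ :=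
      Set.eq_empty_of_forall_notMem fun t ht => by nlinarith [ht.2, sq_nonneg t]
    rw [hempty, measure_empty, sqrt_eq_zero'.2 hβ.le, eq_comm, ENNReal.ofReal_eq_zero]
    linarith
  have hnull : volume (Set.Icc (-√β) (-√α) ∩ Set.Icc √α √β) = 0 := by
    refine measure_mono_null (t := Set.Icc √α (-√α)) (fun x hx => ⟨hx.2.1, hx.1.2⟩) ?_
    rw [volume_Icc, ENNReal.ofReal_eq_zero]
    linarith
  rw [setOf_sq_mem_Icc_eq_union hβ, measure_union₀ measurableSet_Icc.nullMeasurableSet hnull,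
    volume_Icc, volume_Icc, neg_sub_neg, ENNReal.ofReal_mul zero_le_two, ENNReal.ofReal_ofNat,
    two_mul]

lemma volume_preimage_mul_add {m : ℝ} (hm : m ≠ 0) (b : ℝ) (s : Set ℝ) :
    volume ((fun x => m * x + b) ⁻¹' s) = ENNReal.ofReal |m⁻¹| * volume s := by
  rw [show (fun x => m * x + b) ⁻¹' s = (m * ·) ⁻¹' ((· + b) ⁻¹' s) from rfl,
    volume_preimage_mul_left hm, measure_preimage_add_right]

lemma sqrt_sub_sqrt_eq_div_add {x y : ℝ} (hx : 0 ≤ x) (hy : 0 < y) :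
    √x - √y = (x - y) / (√x + √y) := by
  rw [eq_div_iff (add_pos_of_nonneg_of_pos (sqrt_nonneg x) (sqrt_pos.2 hy)).ne']
  linear_combination sq_sqrt hx - sq_sqrt hy.le

end Real

open Real

lemma four_mul_quadratic_eq (a b c x : ℝ) :
    4 * a * (a * x ^ 2 + b * x + c) = (2 * a * x + b) ^ 2 - (b ^ 2 - 4 * a * c) := by
  ring

lemma setOf_quadratic_mem_Icc_of_neg {a : ℝ} (ha : a < 0) (b c N : ℝ) :
    {x : ℝ | 0 ≤ a * x ^ 2 + b * x + c ∧ a * x ^ 2 + b * x + c ≤ N} =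
      (fun x => 2 * a * x + b) ⁻¹'
        {u | b ^ 2 - 4 * a * c + 4 * a * N ≤ u ^ 2 ∧ u ^ 2 ≤ b ^ 2 - 4 * a * c} := by
  ext x
  have := four_mul_quadratic_eq a b c x
  simp only [Set.mem_ofPred_eq, Set.mem_preimage]
  constructor <;> rintro ⟨h₁, h₂⟩ <;> constructor <;> nlinarith

lemma setOf_quadratic_mem_Icc_of_pos {a : ℝ} (ha : 0 < a) (b c N : ℝ) :
    {x : ℝ | 0 ≤ a * x ^ 2 + b * x + c ∧ a * x ^ 2 + b * x + c ≤ N} =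
      (fun x => 2 * a * x + b) ⁻¹'
        {u | b ^ 2 - 4 * a * c ≤ u ^ 2 ∧ u ^ 2 ≤ b ^ 2 - 4 * a * c + 4 * a * N} := by
  ext x
  have := four_mul_quadratic_eq a b c x
  simp only [Set.mem_ofPred_eq, Set.mem_preimage]
  constructor <;> rintro ⟨h₁, h₂⟩ <;> constructor <;> nlinarith

theorem volume_setOf_quadratic_mem_Icc {a : ℝ} (ha : a ≠ 0) (b c N : ℝ) :
    volume {x : ℝ | 0 ≤ a * x ^ 2 + b * x + c ∧ a * x ^ 2 + b * x + c ≤ N} =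
      ENNReal.ofReal ((√(b ^ 2 - 4 * a * c + 4 * a * N) - √(b ^ 2 - 4 * a * c)) / a) := by
  have h2a : 2 * a ≠ 0 := mul_ne_zero two_ne_zero ha
  rcases ha.lt_or_gt with ha | ha
  · rw [setOf_quadratic_mem_Icc_of_neg ha, volume_preimage_mul_add h2a, volume_setOf_sq_mem_Icc,
      ← ENNReal.ofReal_mul (abs_nonneg _), abs_of_neg (inv_lt_zero.2 (by linarith))]
    congr 1
    field_simp
    ring
  · rw [setOf_quadratic_mem_Icc_of_pos ha, volume_preimage_mul_add h2a, volume_setOf_sq_mem_Icc,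
      ← ENNReal.ofReal_mul (abs_nonneg _), abs_of_pos (inv_pos.2 (by linarith))]
    congr 1
    field_simp

lemma le_div_four_mul_abs_iff {a Δ N : ℝ} (ha : a < 0) :
    N ≤ Δ / (4 * |a|) ↔ 0 ≤ Δ + 4 * a * N := by
  rw [abs_of_neg ha, le_div_iff₀ (by linarith)]
  constructor <;> intro h <;> linarith

theorem measure_of_superlevel_set (a b c : ℝ) (ha : a ≠ 0)
    (hD : b ^ 2 - 4 * a * c ≠ 0) (N : ℝ) (hN : 0 < N) :
    (MeasureTheory.volume
        {x : ℝ | 0 ≤ a * x ^ 2 + b * x + c ∧ a * x ^ 2 + b * x + c ≤ N}).toReal =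
      (if b ^ 2 - 4 * a * c < 0 ∧ 0 < a ∧ |b ^ 2 - 4 * a * c| / (4 * a) < N then
        Real.sqrt (b ^ 2 - 4 * a * c + 4 * a * N) / a
      else if 0 < b ^ 2 - 4 * a * c ∧ (0 < a ∨
          (a < 0 ∧ N ≤ (b ^ 2 - 4 * a * c) / (4 * |a|))) then
        4 * N / (Real.sqrt (b ^ 2 - 4 * a * c + 4 * a * N) + Real.sqrt (b ^ 2 - 4 * a * c))
      else if 0 < b ^ 2 - 4 * a * c ∧ a < 0 ∧ (b ^ 2 - 4 * a * c) / (4 * |a|) < N then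
        Real.sqrt (b ^ 2 - 4 * a * c) / |a|
      else 0) := by
  rw [volume_setOf_quadratic_mem_Icc ha b c N, ENNReal.toReal_ofReal']
  set Δ := b ^ 2 - 4 * a * c
  split_ifs with h₁ h₂ h₃
  · obtain ⟨hΔ, ha, -⟩ := h₁
    rw [sqrt_eq_zero'.2 hΔ.le, sub_zero]
    exact max_eq_left (by positivity)
  · obtain ⟨hΔ, hsign⟩ := h₂
    have hS : 0 ≤ Δ + 4 * a * N := by
      rcases hsign with ha | ⟨ha, hN'⟩
      · nlinarith
      · exact (le_div_four_mul_abs_iff ha).1 hN'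
    have hrat : (√(Δ + 4 * a * N) - √Δ) / a = 4 * N / (√(Δ + 4 * a * N) + √Δ) := by
      rw [sqrt_sub_sqrt_eq_div_add hS hΔ]
      field_simp
      ring
    rw [hrat]
    exact max_eq_left (div_nonneg (by linarith) (by positivity))
  · obtain ⟨hΔ, ha, hN'⟩ := h₃
    have hS : Δ + 4 * a * N < 0 :=
      (lt_iff_lt_of_le_iff_le (le_div_four_mul_abs_iff ha)).1 hN'
    rw [sqrt_eq_zero'.2 hS.le, zero_sub, neg_div, ← div_neg, abs_of_neg ha]
    exact max_eq_left (div_nonneg (sqrt_nonneg _) (by linarith))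
  · refine max_eq_right ?_
    rcases hD.lt_or_gt with hΔ | hΔ
    · rw [sqrt_eq_zero'.2 hΔ.le, sub_zero]
      rcases ha.lt_or_gt with ha | ha
      · exact div_nonpos_of_nonneg_of_nonpos (sqrt_nonneg _) ha.le
      · have hS : Δ + 4 * a * N ≤ 0 := by
          by_contra! hS
          exact h₁ ⟨hΔ, ha, by rw [abs_of_neg hΔ, div_lt_iff₀ (by positivity)]; linarith⟩
        rw [sqrt_eq_zero'.2 hS, zero_div]
    · exfalso
      rcases ha.lt_or_gt with ha | ha
      · exact h₂ ⟨hΔ, Or.inr ⟨ha, not_lt.1 fun h => h₃ ⟨hΔ, ha, h⟩⟩⟩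
      · exact h₂ ⟨hΔ, Or.inl ha⟩
end
end

section
/- Let f be a quadratic polynomial as in the context with |Δ| ≥ 3, A ≥ 2, 0 < L(1,χ_Δ)·log|Δ| < 1, and suppose A ≤ 4·√(N/|a|) and N ≤ |a|·|Δ|^{β/2}. Then β < 2L, i.e. L(1,χ_Δ)·log|Δ| > (L(1,χ_Δ)·log A)². -/
open Finset

noncomputable section

/-!
Put `E = |Δ|^{β/4}`, so that `N ≤ |a| E²`. For `Δ < 0` the identity
`(n + b/2a)² = f(n)/a + Δ/4a²` puts `𝒜` in an interval of length `2√(N/|a|) ≤ 2E`, and for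
`Δ > 0` the bound `A ≤ 4√(N/|a|)` applies; either way `A ≤ |Δ| E`, i.e.
`log A ≤ (1 + β/4) log |Δ|`. As `L(1,χ_Δ) log |Δ| = e^{-β}`, this gives
`L(1,χ_Δ) log A ≤ e^{-β} (1 + β/4) ≤ e^{-3β/4} < e^{-β/2}`, which is the claim.
-/

lemma setOf_abs_sub_le_eq (v r : ℝ) :
    {n : ℤ | |(n : ℝ) - v| ≤ r} = ↑(Finset.Icc ⌈v - r⌉ ⌊v + r⌋) := by
  ext n
  simp only [Set.mem_ofPred_eq, coe_Icc, Set.mem_Icc, Int.ceil_le, Int.le_floor, abs_sub_le_iff]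
  constructor <;> rintro ⟨h₁, h₂⟩ <;> constructor <;> linarith

lemma ncard_abs_sub_le (v : ℝ) {r : ℝ} (hr : 0 ≤ r) :
    ({n : ℤ | |(n : ℝ) - v| ≤ r}.ncard : ℝ) ≤ 2 * r + 1 := by
  rw [setOf_abs_sub_le_eq, Set.ncard_coe_finset, Int.card_Icc]
  have h_ceil := Int.le_ceil (v - r)
  have h_floor := Int.floor_le (v + r)
  have h_nonneg : 0 ≤ ⌊v + r⌋ + 1 - ⌈v - r⌉ := by
    have := Int.ceil_lt_add_one (v - r)
    have := Int.lt_floor_add_one (v + r)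
    have : (⌈v - r⌉ : ℝ) < ⌊v + r⌋ + 2 := by linarith
    have : ⌈v - r⌉ < ⌊v + r⌋ + 2 := by exact_mod_cast this
    omega
  rw [← Int.cast_natCast, Int.toNat_of_nonneg h_nonneg]
  push_cast
  linarith

lemma sq_sub_vertex_eq {a : ℤ} (ha : a ≠ 0) (b c n : ℤ) :
    ((n : ℝ) - -(b / (2 * a))) ^ 2 = fInt a b c n / a + (b ^ 2 - 4 * a * c : ℤ) / (4 * a ^ 2) := by
  unfold fInt
  push_cast
  field_simp
  ring

lemma Acard_le_two_sqrt_add_one {a b c : ℤ} (ha : a ≠ 0) (hdisc : b ^ 2 - 4 * a * c < 0)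
    (N : ℤ) : (Acard a b c N : ℝ) ≤ 2 * √((N : ℝ) / |(a : ℝ)|) + 1 := by
  have ha' : (0 : ℝ) < |(a : ℝ)| := abs_pos.mpr (Int.cast_ne_zero.mpr ha)
  set r := √((N : ℝ) / |(a : ℝ)|)
  have h_sub : {n : ℤ | 0 ≤ fInt a b c n ∧ fInt a b c n ≤ N} ⊆
      {n : ℤ | |(n : ℝ) - -(b / (2 * a))| ≤ r} := by
    rintro n ⟨h₀, hN⟩
    apply Real.abs_le_sqrt
    have h_disc : ((b ^ 2 - 4 * a * c : ℤ) : ℝ) / (4 * a ^ 2) ≤ 0 :=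
      div_nonpos_of_nonpos_of_nonneg (by exact_mod_cast hdisc.le) (by positivity)
    have h_f : (fInt a b c n : ℝ) / a ≤ N / |(a : ℝ)| :=
      calc (fInt a b c n : ℝ) / a ≤ |(fInt a b c n : ℝ) / a| := le_abs_self _
        _ = fInt a b c n / |(a : ℝ)| := by
          rw [abs_div, abs_of_nonneg (by exact_mod_cast h₀)]
        _ ≤ N / |(a : ℝ)| := by gcongr
    rw [sq_sub_vertex_eq ha]
    exact add_le_of_le_of_nonpos h_f h_disc
  have h_fin : {n : ℤ | |(n : ℝ) - -(b / (2 * a))| ≤ r}.Finite := by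
    rw [setOf_abs_sub_le_eq]; exact Finset.finite_toSet _
  calc (Acard a b c N : ℝ) ≤ {n : ℤ | |(n : ℝ) - -(b / (2 * a))| ≤ r}.ncard := by
        exact_mod_cast Set.ncard_le_ncard h_sub h_fin
    _ ≤ 2 * r + 1 := ncard_abs_sub_le _ (Real.sqrt_nonneg _)

lemma disc_emod_four (a b c : ℤ) :
    (b ^ 2 - 4 * a * c) % 4 = 0 ∨ (b ^ 2 - 4 * a * c) % 4 = 1 := by
  rcases Int.even_or_odd' b with ⟨k, rfl | rfl⟩
  · left; ring_nf; omega
  · right; ring_nf; omega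

lemma Acard_le_abs_disc_mul {a b c D N : ℤ} (ha : a ≠ 0) (hD : D = b ^ 2 - 4 * a * c)
    (hDabs : (3 : ℝ) ≤ |(D : ℝ)|)
    (hAub : (Acard a b c N : ℝ) ≤ 4 * √((N : ℝ) / |(a : ℝ)|))
    {E : ℝ} (hE : 1 ≤ E) (hNE : √((N : ℝ) / |(a : ℝ)|) ≤ E) :
    (Acard a b c N : ℝ) ≤ |(D : ℝ)| * E := by
  have hD0 : D ≠ 0 := by rintro rfl; norm_num at hDabs
  rcases hD0.lt_or_gt with hneg | hpos
  · calc (Acard a b c N : ℝ) ≤ 2 * √((N : ℝ) / |(a : ℝ)|) + 1 :=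
          Acard_le_two_sqrt_add_one ha (hD ▸ hneg) N
      _ ≤ 3 * E := by linarith
      _ ≤ |(D : ℝ)| * E := by gcongr
  · -- a positive discriminant is `≡ 0, 1 (mod 4)`, so `|D| ≥ 3` forces `|D| ≥ 4`
    have h4 : (4 : ℝ) ≤ |(D : ℝ)| := by
      rw [← Int.cast_abs, abs_of_pos hpos] at hDabs ⊢
      have h3 : (3 : ℤ) ≤ D := by exact_mod_cast hDabs
      have := disc_emod_four a b c
      have : (4 : ℤ) ≤ D := by omega
      exact_mod_cast this
    calc (Acard a b c N : ℝ) ≤ 4 * √((N : ℝ) / |(a : ℝ)|) := hAub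
      _ ≤ 4 * E := by gcongr
      _ ≤ |(D : ℝ)| * E := by gcongr

lemma log_Acard_le {a b c D N : ℤ} (ha : a ≠ 0) (hD : D = b ^ 2 - 4 * a * c)
    (hDabs : (3 : ℝ) ≤ |(D : ℝ)|)
    (hAub : (Acard a b c N : ℝ) ≤ 4 * √((N : ℝ) / |(a : ℝ)|))
    {β : ℝ} (hβ : 0 ≤ β) (hNub : (N : ℝ) ≤ |(a : ℝ)| * |(D : ℝ)| ^ (β / 2)) :
    Real.log (Acard a b c N) ≤ (1 + β / 4) * Real.log |(D : ℝ)| := by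
  have hD1 : (1 : ℝ) ≤ |(D : ℝ)| := by linarith
  have hE : √((N : ℝ) / |(a : ℝ)|) ≤ |(D : ℝ)| ^ (β / 4) := by
    rw [Real.sqrt_le_left (by positivity), ← Real.rpow_natCast, ← Real.rpow_mul (by positivity),
      div_le_iff₀ (abs_pos.mpr (Int.cast_ne_zero.mpr ha)), mul_comm,
      show β / 4 * ((2 : ℕ) : ℝ) = β / 2 by push_cast; ring]
    exact hNub
  have hA := Acard_le_abs_disc_mul ha hD hDabs hAub (Real.one_le_rpow hD1 (by positivity)) hE
  rcases (Nat.cast_nonneg (α := ℝ) (Acard a b c N)).eq_or_lt with hA0 | hA0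
  · rw [← hA0, Real.log_zero]
    exact mul_nonneg (by positivity) (Real.log_nonneg hD1)
  calc Real.log (Acard a b c N) ≤ Real.log (|(D : ℝ)| * |(D : ℝ)| ^ (β / 4)) :=
        Real.log_le_log hA0 hA
    _ = (1 + β / 4) * Real.log |(D : ℝ)| := by
      rw [Real.log_mul (by positivity) (by positivity), Real.log_rpow (by positivity)]; ring

lemma exp_neg_mul_one_add_div_four_lt {β : ℝ} (hβ : 0 < β) :
    Real.exp (-β) * (1 + β / 4) < Real.exp (-β / 2) :=
  calc Real.exp (-β) * (1 + β / 4) ≤ Real.exp (-β) * Real.exp (β / 4) := by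
        gcongr; linarith [Real.add_one_le_exp (β / 4)]
    _ < Real.exp (-β) * Real.exp (β / 2) := by gcongr; linarith
    _ = Real.exp (-β / 2) := by rw [← Real.exp_add]; ring_nf

theorem beta_lt_two_L_general (a b c D N : ℤ)
    (ha : a ≠ 0)
    (hD : D = b ^ 2 - 4 * a * c)
    (hDabs : (3:ℝ) ≤ |(D : ℝ)|) (hA : 2 ≤ Acard a b c N)
    (hLpos : 0 < LOne D * Real.log |(D : ℝ)|)
    (hLlt : LOne D * Real.log |(D : ℝ)| < 1)
    (hAub : (Acard a b c N : ℝ) ≤ 4 * Real.sqrt ((N : ℝ) / |(a : ℝ)|))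
    (hNub : (N : ℝ) ≤ ((|a| : ℤ) : ℝ) * |(D : ℝ)| ^ (betaE D / 2)) :
    betaE D < 2 * (-Real.log (LOne D * Real.log (Acard a b c N : ℝ))) ∧
      (LOne D * Real.log (Acard a b c N : ℝ)) ^ 2 < LOne D * Real.log |(D : ℝ)| := by
  have hX : LOne D * Real.log |(D : ℝ)| = Real.exp (-betaE D) := by
    rw [betaE, neg_neg, Real.exp_log hLpos]
  have hβ : 0 < betaE D := neg_pos.mpr (Real.log_neg hLpos hLlt)
  have hlogA := log_Acard_le ha hD hDabs hAub hβ.le (by rwa [Int.cast_abs] at hNub)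
  set β := betaE D
  set A : ℝ := (Acard a b c N : ℝ)
  have hL : 0 < LOne D := pos_of_mul_pos_left hLpos (Real.log_nonneg (by linarith))
  have hℓpos : 0 < LOne D * Real.log A :=
    mul_pos hL (Real.log_pos (by unfold A; exact_mod_cast hA))
  have hℓ : LOne D * Real.log A < Real.exp (-β / 2) :=
    calc LOne D * Real.log A ≤ LOne D * ((1 + β / 4) * Real.log |(D : ℝ)|) := by gcongr
      _ = Real.exp (-β) * (1 + β / 4) := by rw [← hX]; ring
      _ < Real.exp (-β / 2) := exp_neg_mul_one_add_div_four_lt hβ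
  constructor
  · have := Real.log_lt_log hℓpos hℓ
    rw [Real.log_exp] at this
    linarith
  · calc (LOne D * Real.log A) ^ 2 < Real.exp (-β / 2) ^ 2 := by gcongr
      _ = LOne D * Real.log |(D : ℝ)| := by rw [hX, ← Real.exp_nat_mul]; ring_nf

theorem beta_lt_two_L (a b c D N : ℤ)
    (ha : a ≠ 0) (hgcd : Int.gcd a (Int.gcd b c) = 1)
    (hpar : Odd (a + b) ∨ Odd c)
    (hD : D = b ^ 2 - 4 * a * c) (hsq : ¬ IsSquare D)
    (hN : 1 ≤ N) (hDabs : (3:ℝ) ≤ |(D : ℝ)|) (hA : 2 ≤ Acard a b c N)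
    (hLpos : 0 < LOne D * Real.log |(D : ℝ)|)
    (hLlt : LOne D * Real.log |(D : ℝ)| < 1)
    (hAub : (Acard a b c N : ℝ) ≤ 4 * Real.sqrt ((N : ℝ) / |(a : ℝ)|))
    (hNub : (N : ℝ) ≤ ((|a| : ℤ) : ℝ) * |(D : ℝ)| ^ (betaE D / 2)) :
    betaE D < 2 * (-Real.log (LOne D * Real.log (Acard a b c N : ℝ))) ∧
      (LOne D * Real.log (Acard a b c N : ℝ)) ^ 2 < LOne D * Real.log |(D : ℝ)| :=
  beta_lt_two_L_general a b c D N ha hD hDabs hA hLpos hLlt hAub hNub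
end
end
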